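/- As |p| → 0 one has c̄(|p|) → (∫₀¹ 1/g(s) ds)⁻¹, and the correctors χ_p normalized by χ_p(0) = 0 converge uniformly on ℝ to χ₀, the unique increasing solution of c̄(0)·χ₀'(z) = g(χ₀(z)) with χ₀(0) = 0, χ₀(1) = 1. -/

import Mathlib

/-!
Write `ε = ‖p‖²` and `F y = ∫₀^y 1/g`. At an extremum of the periodic function `χ'` the
equation reduces to `c χ' = g (χ)`; hence `c > 0`, `χ' ≤ max g / c`, and, since `χ'` takes the
value `1` on `[0, 1]`, `c ≥ min g`. Along a ray `s ↦ w + s`, `D = χ' - g (χ w) / c` solves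
`ε D' - c D = O(s)`, and a bounded solution of such an equation satisfies `|D 0| = O(ε)` (compare
with `exp (c s / ε)`). Hence `(F ∘ χ)' - 1/c = O(ε)`, so `F (χ_p z) = z / c̄(p) + O(ε |z|)`, with
no error term for `p = 0`. At `z = 1` this gives `1 / c̄(p) → F 1`, and since `χ_p - χ_0` is
`1`-periodic and `F⁻¹` is Lipschitz, `χ_p → χ_0` uniformly.
-/

open Set Filter intervalIntegral
open scoped Topology

noncomputable section

/-- A corrector for `(p, c)`: a C² function `χ : ℝ → ℝ` with `χ' > 0`, `χ(z+1) = χ(z) + 1`,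
satisfying `|p|²·χ''(z) − c·χ'(z) + g(χ(z)) = 0` for all `z ∈ ℝ`. -/
def IsCorrector {n : ℕ} (g : ℝ → ℝ) (p : EuclideanSpace ℝ (Fin n)) (c : ℝ) (χ : ℝ → ℝ) : Prop :=
  ContDiff ℝ 2 χ ∧ (∀ z, 0 < deriv χ z) ∧ (∀ z, χ (z + 1) = χ z + 1) ∧
  ∀ z, ‖p‖ ^ 2 * deriv (deriv χ) z - c * deriv χ z + g (χ z) = 0

lemma Function.Periodic.exists_forall_le_and_forall_le {f : ℝ → ℝ} {T : ℝ}
    (hf : Function.Periodic f T) (hT : T ≠ 0) (hc : Continuous f) :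
    ∃ x₀ x₁, (∀ y, f x₀ ≤ f y) ∧ ∀ y, f y ≤ f x₁ := by
  have hK := hf.compact_of_continuous hT hc
  obtain ⟨_, ⟨x₀, rfl⟩, hx₀⟩ := hK.exists_isLeast (range_nonempty f)
  obtain ⟨_, ⟨x₁, rfl⟩, hx₁⟩ := hK.exists_isGreatest (range_nonempty f)
  exact ⟨x₀, x₁, fun y => hx₀ ⟨y, rfl⟩, fun y => hx₁ ⟨y, rfl⟩⟩

lemma apply_zero_nonpos_of_mul_le_deriv {f f' : ℝ → ℝ} {a B : ℝ} (ha : 0 < a)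
    (hf : ∀ s, HasDerivAt f (f' s) s) (hle : ∀ s ≥ 0, a * f s ≤ f' s)
    (hB : ∀ s ≥ 0, f s ≤ B) : f 0 ≤ 0 := by
  set h : ℝ → ℝ := fun s => Real.exp (-(a * s)) * f s
  have hh : ∀ s, HasDerivAt h (Real.exp (-(a * s)) * (f' s - a * f s)) s := fun s => by
    have he : HasDerivAt (fun s => -(a * s)) (-a) s := by
      simpa using (hasDerivAt_id s).const_mul (-a)
    exact (he.exp.mul (hf s)).congr_deriv (by ring)
  have hmono : MonotoneOn h (Ici 0) := by
    refine monotoneOn_of_deriv_nonneg (convex_Ici 0)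
      (fun s _ => (hh s).continuousAt.continuousWithinAt)
      (fun s _ => (hh s).differentiableAt.differentiableWithinAt) fun s hs => ?_
    rw [interior_Ici] at hs
    rw [(hh s).deriv]
    exact mul_nonneg (Real.exp_pos _).le (sub_nonneg.2 (hle s (le_of_lt hs)))
  have hdecay : Tendsto (fun s => Real.exp (-(a * s)) * max B 0) atTop (𝓝 0) := by
    simpa using (Real.tendsto_exp_neg_atTop_nhds_zero.comp
      (tendsto_id.const_mul_atTop ha)).mul_const (max B 0)
  refine ge_of_tendsto hdecay ((eventually_ge_atTop 0).mono fun s hs => ?_)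
  calc f 0 = h 0 := by simp [h]
    _ ≤ h s := hmono self_mem_Ici hs hs
    _ ≤ Real.exp (-(a * s)) * max B 0 :=
        mul_le_mul_of_nonneg_left ((hB s hs).trans (le_max_left _ _)) (Real.exp_pos _).le

lemma apply_zero_le_of_neg_le_mul_deriv_sub {D D' : ℝ → ℝ} {ε c L B : ℝ} (hε : 0 < ε)
    (hc : 0 < c) (hL : 0 ≤ L) (hD : ∀ s, HasDerivAt D (D' s) s) (hB : ∀ s ≥ 0, D s ≤ B)
    (hode : ∀ s ≥ 0, -(L * s) ≤ ε * D' s - c * D s) : D 0 ≤ L * ε / c ^ 2 := by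
  have key := apply_zero_nonpos_of_mul_le_deriv (f := fun s => D s - L / c * s - L * ε / c ^ 2)
    (B := B) (div_pos hc hε)
    (fun s => ((hD s).sub ((hasDerivAt_id s).const_mul (L / c))).sub_const _)
    (fun s hs => ?_) (fun s hs => ?_)
  · simpa using key
  · have hrw : c / ε * (D s - L / c * s - L * ε / c ^ 2) = (c * D s - L * s) / ε - L / c := by
      field_simp
    simp only [mul_one, hrw, sub_le_sub_iff_right, div_le_iff₀ hε]
    linarith [hode s hs]
  · have := hB s hs
    have : 0 ≤ L / c * s := by positivity
    have : 0 ≤ L * ε / c ^ 2 := by positivity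
    linarith

lemma abs_apply_zero_le_of_abs_mul_deriv_sub_le {D D' : ℝ → ℝ} {ε c L B : ℝ} (hε : 0 ≤ ε)
    (hc : 0 < c) (hD : ∀ s, HasDerivAt D (D' s) s) (hB : ∀ s ≥ 0, |D s| ≤ B)
    (hode : ∀ s ≥ 0, |ε * D' s - c * D s| ≤ L * s) : |D 0| ≤ L * ε / c ^ 2 := by
  rcases hε.eq_or_lt with rfl | hε
  · have h0 : c * |D 0| ≤ 0 := by simpa [abs_mul, abs_of_pos hc] using hode 0 le_rfl
    rw [mul_zero, zero_div]
    nlinarith [abs_nonneg (D 0)]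
  have hL : 0 ≤ L := by simpa using (abs_nonneg _).trans (hode 1 zero_le_one)
  have hle := apply_zero_le_of_neg_le_mul_deriv_sub hε hc hL hD
    (fun s hs => (le_abs_self _).trans (hB s hs)) fun s hs => by linarith [(abs_le.1 (hode s hs)).1]
  have hge := apply_zero_le_of_neg_le_mul_deriv_sub (D := fun s => -D s) (D' := fun s => -D' s)
    hε hc hL (fun s => (hD s).neg)
    (fun s hs => (neg_le_abs _).trans (hB s hs)) fun s hs => by linarith [(abs_le.1 (hode s hs)).2]
  exact abs_le.2 ⟨by linarith, hle⟩

lemma hasDerivAt_integral_inv {g : ℝ → ℝ} (hg : Continuous g) (hpos : ∀ y, 0 < g y) (y : ℝ) :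
    HasDerivAt (fun u => ∫ s in (0:ℝ)..u, (g s)⁻¹) (g y)⁻¹ y :=
  ((hg.inv₀ fun s => (hpos s).ne').integral_hasStrictDerivAt 0 y).hasDerivAt

lemma abs_sub_le_mul_abs_integral_inv_sub {g : ℝ → ℝ} {M : ℝ} (hg : Continuous g)
    (hpos : ∀ y, 0 < g y) (hM : ∀ y, g y ≤ M) (a b : ℝ) :
    |a - b| ≤ M * |(∫ s in (0:ℝ)..a, (g s)⁻¹) - ∫ s in (0:ℝ)..b, (g s)⁻¹| := by
  have hF := hasDerivAt_integral_inv hg hpos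
  have hM0 : 0 < M := (hpos 0).trans_le (hM 0)
  have key : ∀ x y, x ≤ y →
      |y - x| ≤ M * |(∫ s in (0:ℝ)..y, (g s)⁻¹) - ∫ s in (0:ℝ)..x, (g s)⁻¹| := fun x y hxy => by
    have := mul_sub_le_image_sub_of_le_deriv (fun y => (hF y).differentiableAt)
      (fun y => (hF y).deriv ▸ inv_anti₀ (hpos y) (hM y)) hxy
    rw [inv_mul_le_iff₀ hM0] at this
    rw [abs_of_nonneg (sub_nonneg.2 hxy)]
    exact this.trans (mul_le_mul_of_nonneg_left (le_abs_self _) hM0.le)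
  rcases le_total b a with hba | hab
  · exact key b a hba
  · rw [abs_sub_comm, abs_sub_comm (∫ s in (0:ℝ)..a, (g s)⁻¹)]
    exact key a b hab

lemma abs_integral_inv_comp_sub_le {g χ : ℝ → ℝ} {m c E : ℝ} (hg : Continuous g)
    (hm : 0 < m) (hmg : ∀ y, m ≤ g y) (hχ : Differentiable ℝ χ) (hχ0 : χ 0 = 0)
    (hE : ∀ w, |deriv χ w - g (χ w) / c| ≤ E) (z : ℝ) :
    |(∫ s in (0:ℝ)..(χ z), (g s)⁻¹) - z * c⁻¹| ≤ E / m * |z| := by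
  have hpos : ∀ y, 0 < g y := fun y => hm.trans_le (hmg y)
  have hder : ∀ x, HasDerivAt (fun x => (∫ s in (0:ℝ)..(χ x), (g s)⁻¹) - x * c⁻¹)
      ((deriv χ x - g (χ x) / c) / g (χ x)) x := fun x => by
    refine (((hasDerivAt_integral_inv hg hpos (χ x)).comp x (hχ x).hasDerivAt).sub
      ((hasDerivAt_id x).mul_const c⁻¹)).congr_deriv ?_
    field_simp [(hpos (χ x)).ne']
  have hbound : ∀ x, ‖(deriv χ x - g (χ x) / c) / g (χ x)‖ ≤ E / m := fun x => by
    rw [Real.norm_eq_abs, abs_div, abs_of_pos (hpos _)]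
    exact div_le_div₀ ((abs_nonneg _).trans (hE 0)) (hE x) hm (hmg _)
  simpa [hχ0] using convex_univ.norm_image_sub_le_of_norm_hasDerivWithin_le
    (fun x _ => (hder x).hasDerivWithinAt) (fun x _ => hbound x) (mem_univ 0) (mem_univ z)

lemma abs_sub_le_of_abs_integral_inv_comp_sub_le {g χ₀ χ : ℝ → ℝ} {M a b δ : ℝ}
    (hg : Continuous g) (hpos : ∀ y, 0 < g y) (hM : ∀ y, g y ≤ M)
    (hχ₀ : ∀ z, χ₀ (z + 1) = χ₀ z + 1) (hχ : ∀ z, χ (z + 1) = χ z + 1)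
    (h₀ : ∀ z, (∫ s in (0:ℝ)..(χ₀ z), (g s)⁻¹) = z * a)
    (h : ∀ z, |(∫ s in (0:ℝ)..(χ z), (g s)⁻¹) - z * b| ≤ δ * |z|) (hab : |a - b| ≤ δ) (z : ℝ) :
    |χ₀ z - χ z| ≤ M * (2 * δ) := by
  have hdiff : Function.Periodic (fun z => χ₀ z - χ z) 1 := fun z => by
    simp only [hχ₀, hχ]; ring
  obtain ⟨r, ⟨hr0, hr1⟩, hzr⟩ := hdiff.exists_mem_Ico₀ one_pos z
  have hr : |r| ≤ 1 := by rw [abs_of_nonneg hr0]; exact hr1.le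
  have hδ : 0 ≤ δ := (abs_nonneg _).trans hab
  rw [hzr]
  refine (abs_sub_le_mul_abs_integral_inv_sub hg hpos hM _ _).trans
    (mul_le_mul_of_nonneg_left ?_ ((hpos 0).le.trans (hM 0)))
  calc |(∫ s in (0:ℝ)..(χ₀ r), (g s)⁻¹) - ∫ s in (0:ℝ)..(χ r), (g s)⁻¹|
      = |r * (a - b) - ((∫ s in (0:ℝ)..(χ r), (g s)⁻¹) - r * b)| := by rw [h₀]; ring_nf
    _ ≤ |r| * |a - b| + δ * |r| := by
        rw [← abs_mul]; exact (abs_sub _ _).trans (add_le_add le_rfl (h r))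
    _ ≤ 1 * δ + δ * 1 := by gcongr
    _ = 2 * δ := by ring

namespace IsCorrector

variable {n : ℕ} {g χ : ℝ → ℝ} {p : EuclideanSpace ℝ (Fin n)} {c : ℝ}

lemma differentiable (h : IsCorrector g p c χ) : Differentiable ℝ χ :=
  h.1.differentiable (by norm_num)

lemma periodic_deriv (h : IsCorrector g p c χ) : Function.Periodic (deriv χ) 1 := fun z => by
  rw [← deriv_comp_add_const, funext h.2.2.1, deriv_add_const]

lemma apply_one (h : IsCorrector g p c χ) (h0 : χ 0 = 0) : χ 1 = 1 := by
  simpa [h0] using h.2.2.1 0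

/-- At an extremum of `χ'` the second-order term of the equation vanishes. -/
lemma exists_min_max_deriv (h : IsCorrector g p c χ) :
    ∃ z₀ z₁, (c * deriv χ z₀ = g (χ z₀) ∧ ∀ z, deriv χ z₀ ≤ deriv χ z) ∧
      (c * deriv χ z₁ = g (χ z₁) ∧ ∀ z, deriv χ z ≤ deriv χ z₁) := by
  have hcrit : ∀ z, deriv (deriv χ) z = 0 → c * deriv χ z = g (χ z) := fun z hz => by
    linarith [hz ▸ h.2.2.2 z]
  obtain ⟨z₀, z₁, hmin, hmax⟩ := h.periodic_deriv.exists_forall_le_and_forall_le one_ne_zero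
    (h.1.continuous_deriv (by norm_num))
  exact ⟨z₀, z₁, ⟨hcrit z₀ (IsLocalMin.deriv_eq_zero (.of_forall hmin)), hmin⟩,
    hcrit z₁ (IsLocalMax.deriv_eq_zero (.of_forall hmax)), hmax⟩

lemma pos (h : IsCorrector g p c χ) (hpos : ∀ y, 0 < g y) : 0 < c := by
  obtain ⟨-, z₁, -, hz₁, -⟩ := h.exists_min_max_deriv
  exact pos_of_mul_pos_left (hz₁ ▸ hpos _) (h.2.1 z₁).le

lemma deriv_le {M : ℝ} (h : IsCorrector g p c χ) (hpos : ∀ y, 0 < g y) (hM : ∀ y, g y ≤ M)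
    (z : ℝ) : deriv χ z ≤ M / c := by
  obtain ⟨-, z₁, -, hz₁, hmax⟩ := h.exists_min_max_deriv
  rw [le_div_iff₀' (h.pos hpos)]
  calc c * deriv χ z ≤ c * deriv χ z₁ := mul_le_mul_of_nonneg_left (hmax z) (h.pos hpos).le
    _ ≤ M := hz₁ ▸ hM _

/-- By the mean value theorem `χ'` takes the value `1`, so its minimum is at most `1`. -/
lemma le_of_forall_le {m : ℝ} (h : IsCorrector g p c χ) (hpos : ∀ y, 0 < g y)
    (hm : ∀ y, m ≤ g y) : m ≤ c := by
  obtain ⟨z₀, -, ⟨hz₀, hmin⟩, -⟩ := h.exists_min_max_deriv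
  obtain ⟨ξ, -, hξ⟩ := exists_deriv_eq_slope χ zero_lt_one
    h.differentiable.continuous.continuousOn h.differentiable.differentiableOn
  rw [show χ 1 = χ 0 + 1 by simpa using h.2.2.1 0] at hξ
  calc m ≤ c * deriv χ z₀ := hz₀ ▸ hm _
    _ ≤ c * deriv χ ξ := mul_le_mul_of_nonneg_left (hmin ξ) (h.pos hpos).le
    _ = c := by rw [hξ]; simp

/-- `D s = χ' (w + s) - g (χ w) / c` solves `‖p‖² D' - c D = g (χ w) - g (χ (w + s))`, and the
right-hand side is `O(s)` because `g ∘ χ` is Lipschitz. -/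
lemma abs_deriv_sub_le {K : NNReal} {M : ℝ} (h : IsCorrector g p c χ) (hpos : ∀ y, 0 < g y)
    (hK : LipschitzWith K g) (hM : ∀ y, g y ≤ M) (w : ℝ) :
    |deriv χ w - g (χ w) / c| ≤ K * M * ‖p‖ ^ 2 / c ^ 3 := by
  have hc := h.pos hpos
  have hχ' : ∀ z, |deriv χ z| ≤ M / c := fun z => by
    rw [abs_of_pos (h.2.1 z)]; exact h.deriv_le hpos hM z
  have hlip : ∀ s ≥ 0, |χ (w + s) - χ w| ≤ M / c * s := fun s hs => by
    simpa [abs_of_nonneg hs] using convex_univ.norm_image_sub_le_of_norm_deriv_le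
      (fun z _ => h.differentiable z) (fun z _ => hχ' z) (mem_univ w) (mem_univ (w + s))
  have key := abs_apply_zero_le_of_abs_mul_deriv_sub_le
    (D := fun s => deriv χ (w + s) - g (χ w) / c) (ε := ‖p‖ ^ 2) (L := K * (M / c))
    (B := M / c + |g (χ w) / c|) (sq_nonneg _) hc
    (fun s => ((h.1.differentiable_deriv_two (w + s)).hasDerivAt.comp_const_add w s).sub_const _)
    (fun s _ => (abs_sub _ _).trans (add_le_add_left (hχ' _) _)) fun s hs => ?_
  · rw [add_zero] at key
    convert key using 1
    field_simp
  have hode := h.2.2.2 (w + s)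
  calc |‖p‖ ^ 2 * deriv (deriv χ) (w + s) - c * (deriv χ (w + s) - g (χ w) / c)|
      = |g (χ (w + s)) - g (χ w)| := by
        rw [← abs_neg]; congr 1; field_simp; linarith
    _ ≤ K * |χ (w + s) - χ w| := by
        simpa [Real.dist_eq] using hK.dist_le_mul (χ (w + s)) (χ w)
    _ ≤ K * (M / c) * s := by
        rw [mul_assoc]; exact mul_le_mul_of_nonneg_left (hlip s hs) K.coe_nonneg

lemma abs_integral_inv_sub_le {K : NNReal} {m M : ℝ} (h : IsCorrector g p c χ) (h0 : χ 0 = 0)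
    (hK : LipschitzWith K g) (hm : 0 < m) (hmg : ∀ y, m ≤ g y) (hM : ∀ y, g y ≤ M) (z : ℝ) :
    |(∫ s in (0:ℝ)..(χ z), (g s)⁻¹) - z * c⁻¹| ≤ K * M / m ^ 4 * ‖p‖ ^ 2 * |z| := by
  have hpos : ∀ y, 0 < g y := fun y => hm.trans_le (hmg y)
  have hM0 : 0 ≤ M := (hpos 0).le.trans (hM 0)
  have hmc := h.le_of_forall_le hpos hmg
  refine (abs_integral_inv_comp_sub_le (E := K * M * ‖p‖ ^ 2 / m ^ 3) hK.continuous hm hmg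
    h.differentiable h0 (fun w => (h.abs_deriv_sub_le hpos hK hM w).trans ?_) z).trans_eq ?_
  · gcongr
  · field_simp

end IsCorrector

/-- As `|p| → 0`, `c̄(|p|) → (∫₀¹ 1/g)⁻¹` and the correctors `χ_p` normalized by `χ_p(0) = 0`
converge uniformly on `ℝ` to `χ₀`, the corrector for `p = 0` (i.e. the unique increasing
solution of `c̄(0)·χ₀' = g(χ₀)` with `χ₀(0) = 0`, `χ₀(1) = 1`). -/
theorem statement_6 {n : ℕ} (g : ℝ → ℝ) (hg : ∃ K, LipschitzWith K g)
    (hper : ∀ y, g (y + 1) = g y) (hpos : ∀ y, 0 < g y)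
    (cbar : EuclideanSpace ℝ (Fin n) → ℝ) (χfun : EuclideanSpace ℝ (Fin n) → ℝ → ℝ)
    (hcorr : ∀ p, IsCorrector g p (cbar p) (χfun p))
    (hnorm : ∀ p, χfun p 0 = 0) :
    Tendsto cbar (𝓝[≠] (0 : EuclideanSpace ℝ (Fin n)))
      (𝓝 ((∫ s in (0:ℝ)..1, (g s)⁻¹)⁻¹)) ∧
    cbar 0 = (∫ s in (0:ℝ)..1, (g s)⁻¹)⁻¹ ∧
    χfun 0 1 = 1 ∧
    TendstoUniformly (fun p z => χfun p z) (χfun 0)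
      (𝓝[≠] (0 : EuclideanSpace ℝ (Fin n))) := by
  obtain ⟨K, hK⟩ := hg
  obtain ⟨y₀, y₁, hmin, hmax⟩ := Function.Periodic.exists_forall_le_and_forall_le hper one_ne_zero
    hK.continuous
  set I := ∫ s in (0:ℝ)..1, (g s)⁻¹
  set C := K * g y₁ / g y₀ ^ 4
  have hest : ∀ p z, |(∫ s in (0:ℝ)..(χfun p z), (g s)⁻¹) - z * (cbar p)⁻¹| ≤ C * ‖p‖ ^ 2 * |z| :=
    fun p => (hcorr p).abs_integral_inv_sub_le (hnorm p) hK (hpos y₀) hmin hmax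
  have hcbar : ∀ p, |I - (cbar p)⁻¹| ≤ C * ‖p‖ ^ 2 := fun p => by
    simpa [(hcorr p).apply_one (hnorm p)] using hest p 1
  have hI : (cbar 0)⁻¹ = I :=
    (sub_eq_zero.1 (abs_nonpos_iff.1 ((hcbar 0).trans_eq (by simp)))).symm
  have hχ0 : ∀ z, (∫ s in (0:ℝ)..(χfun 0 z), (g s)⁻¹) = z * I := fun z => by
    simpa [sub_eq_zero, hI] using hest 0 z
  have hunif : ∀ p z, |χfun 0 z - χfun p z| ≤ g y₁ * (2 * (C * ‖p‖ ^ 2)) := fun p =>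
    abs_sub_le_of_abs_integral_inv_comp_sub_le hK.continuous hpos hmax (hcorr 0).2.2.1
      (hcorr p).2.2.1 hχ0 (hest p) (hcbar p)
  have hsmall : Tendsto (fun p : EuclideanSpace ℝ (Fin n) => C * ‖p‖ ^ 2) (𝓝 0) (𝓝 0) :=
    (continuous_const.mul (continuous_norm.pow 2)).tendsto' _ _ (by simp)
  refine ⟨?_, by rw [← hI, inv_inv], (hcorr 0).apply_one (hnorm 0), ?_⟩
  · have hinv : Tendsto (fun p => (cbar p)⁻¹) (𝓝 0) (𝓝 I) :=
      tendsto_iff_norm_sub_tendsto_zero.2 <| squeeze_zero (fun _ => norm_nonneg _) (fun p => by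
        rw [Real.norm_eq_abs, abs_sub_comm]; exact hcbar p) hsmall
    simpa using (hinv.mono_left nhdsWithin_le_nhds).inv₀
      (hI ▸ inv_ne_zero ((hcorr 0).pos hpos).ne')
  · rw [Metric.tendstoUniformly_iff]
    intro δ hδ
    have hbound : Tendsto (fun p : EuclideanSpace ℝ (Fin n) => g y₁ * (2 * (C * ‖p‖ ^ 2)))
        (𝓝 0) (𝓝 0) := by
      simpa using (hsmall.const_mul 2).const_mul (g y₁)
    filter_upwards [nhdsWithin_le_nhds (hbound.eventually_lt_const hδ)] with p hp z
    exact (hunif p z).trans_lt hp
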